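/- arXiv:1005.0859 — 4 statements merged into one kernel-verified Lean document; each statement's English description precedes it below -/
import Mathlib

section
/- Let E be a compact subset of ℂ with positive logarithmic capacity. Then there exists a constant C = C_E > 0, depending only on E, such that for every positive integer n and every polynomial P(z) = ∑_{k=0}^n a_k z^k of degree at most n, each coefficient satisfies |a_k| ≤ Cⁿ · max_{z∈E} |P(z)|. -/
open MeasureTheory Filter

/-- The (truncated) logarithmic potential of a measure on `ℂ`. -/
noncomputable def logPotential (μ : Measure ℂ) (z : ℂ) : EReal :=
  ⨆ N : ℕ, ((∫ ζ, min (N : ℝ) (Real.log (1 / ‖z - ζ‖)) ∂μ : ℝ) : EReal)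

/-- The Robin constant of `E`: the infimum, over probability measures supported
in `E`, of the supremum of the logarithmic potential. -/
noncomputable def robinConst (E : Set ℂ) : EReal :=
  ⨅ (μ : Measure ℂ) (_ : IsProbabilityMeasure μ) (_ : μ Eᶜ = 0), ⨆ z : ℂ, logPotential μ z

/-- Logarithmic capacity: `cap E = exp (-robinConst E)`. -/
noncomputable def logCap (E : Set ℂ) : ENNReal := EReal.exp (-(robinConst E))

/-!
Positive capacity provides a probability measure `μ` on `E` whose potential is bounded above by
some `M`; such a measure has no atoms, so `E` is infinite. Let `x₀, …, xₙ` be Fekete points of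
`E`, i.e. maximisers of `∏_{i ≠ k} ‖xᵢ - xₖ‖` on `Eⁿ⁺¹`. Maximality says exactly that the Lagrange
basis polynomials `ℓⱼ` satisfy `‖ℓⱼ‖ ≤ 1` on `E`, and integrating `log ‖∏_{k ≠ j} (ζ - xₖ)‖`
against `μ` then bounds the denominators `∏_{k ≠ j} ‖xⱼ - xₖ‖` of the `ℓⱼ` below by `exp (-n M)`.
Since the numerators `∏_{k ≠ j} (X - xₖ)` have coefficients at most `(1 + R) ^ n` when
`E ⊆ closedBall 0 R`, the interpolation formula `P = ∑ⱼ P(xⱼ) ℓⱼ` gives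
`‖aₖ‖ ≤ (n + 1) (1 + R) ^ n exp (n M) max_E ‖P‖ ≤ (2 (1 + R) exp M) ^ n max_E ‖P‖`.
-/

open Finset Function Polynomial Lagrange

theorem log_norm_sub_le_diam {α : Type*} [SeminormedAddCommGroup α] {S : Set α}
    (hS : Bornology.IsBounded S) {x y : α} (hx : x ∈ S) (hy : y ∈ S) :
    Real.log ‖x - y‖ ≤ Metric.diam S :=
  (Real.log_le_self (norm_nonneg _)).trans (dist_eq_norm x y ▸ Metric.dist_le_diam_of_mem hS hx hy)

theorem min_sub_card_mul_le_sum_min {ι : Type*} {s : Finset ι} {a : ι → ℝ} {L N : ℝ}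
    (hL : 0 ≤ L) (hN : 0 ≤ N) (ha : ∀ i ∈ s, -L ≤ a i) :
    min (N - #s * L) (∑ i ∈ s, a i) ≤ ∑ i ∈ s, min N (a i) := by
  classical
  by_cases h : ∀ i ∈ s, a i ≤ N
  · exact (min_le_right _ _).trans (sum_le_sum fun i hi => (min_eq_right (h i hi)).ge)
  obtain ⟨k, hk, hak⟩ : ∃ k ∈ s, N < a k := by simpa using h
  refine (min_le_left _ _).trans ?_
  rw [← add_sum_erase _ _ hk, min_eq_left hak.le]
  have hrest : ∑ i ∈ s.erase k, -L ≤ ∑ i ∈ s.erase k, min N (a i) :=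
    sum_le_sum fun i hi => le_min (by linarith) (ha i (mem_of_mem_erase hi))
  have hcard : (#(s.erase k) : ℝ) * L ≤ #s * L := by gcongr; exact erase_subset k s
  rw [sum_const, nsmul_eq_mul, mul_neg] at hrest
  linarith

theorem min_sub_card_mul_le_sum_min_neg_log {ι : Type*} {s : Finset ι} {x : ι → ℂ} {ζ : ℂ}
    {L N d : ℝ} (hN : 0 ≤ N) (hL : 0 ≤ L) (hlog : ∀ i ∈ s, Real.log ‖x i - ζ‖ ≤ L)
    (hζ : ∀ i ∈ s, x i ≠ ζ) (hprod : ∏ i ∈ s, ‖ζ - x i‖ ≤ d) :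
    min (N - #s * L) (-Real.log d) ≤ ∑ i ∈ s, min N (-Real.log ‖x i - ζ‖) := by
  have hpos : ∀ i ∈ s, 0 < ‖x i - ζ‖ := fun i hi => norm_pos_iff.2 (sub_ne_zero.2 (hζ i hi))
  calc min (N - #s * L) (-Real.log d)
      ≤ min (N - #s * L) (∑ i ∈ s, -Real.log ‖x i - ζ‖) := by
        gcongr
        rw [sum_neg_distrib, ← Real.log_prod fun i hi => (hpos i hi).ne', neg_le_neg_iff]
        refine Real.log_le_log (prod_pos hpos) ?_
        simpa only [norm_sub_rev] using hprod
    _ ≤ ∑ i ∈ s, min N (-Real.log ‖x i - ζ‖) :=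
      min_sub_card_mul_le_sum_min hL hN fun i hi => neg_le_neg (hlog i hi)

theorem Set.infinite_of_ae_mem {α : Type*} [MeasurableSpace α] {μ : Measure α} [NeZero μ]
    [NullSingletonClass μ] {E : Set α} (hμE : ∀ᵐ x ∂μ, x ∈ E) : E.Infinite := fun hfin =>
  have ⟨_, hx, hx'⟩ := (hμE.and (hfin.countable.ae_notMem μ)).exists
  hx' hx

section Interpolation

variable {ι : Type*} [DecidableEq ι]

theorem norm_coeff_nodal_le {R : Type*} [SeminormedCommRing R] [NormOneClass R]
    (s : Finset ι) (v : ι → R) (k : ℕ) : ‖(nodal s v).coeff k‖ ≤ ∏ i ∈ s, (1 + ‖v i‖) := by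
  induction s using Finset.induction_on generalizing k with
  | empty => rw [nodal_empty, coeff_one]; split_ifs <;> simp
  | insert a s ha ih =>
    rw [nodal_insert_eq_nodal ha, prod_insert ha]
    have hX : ‖(X * nodal s v).coeff k‖ ≤ ∏ i ∈ s, (1 + ‖v i‖) := by
      cases k with
      | zero => simpa using prod_nonneg fun i _ => by positivity
      | succ k => simpa [coeff_X_mul] using ih k
    calc ‖((X - C (v a)) * nodal s v).coeff k‖
        = ‖(X * nodal s v).coeff k - v a * (nodal s v).coeff k‖ := by
          rw [sub_mul, coeff_sub, coeff_C_mul]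
      _ ≤ ‖(X * nodal s v).coeff k‖ + ‖v a‖ * ‖(nodal s v).coeff k‖ :=
          (norm_sub_le _ _).trans (add_le_add_right (norm_mul_le _ _) _)
      _ ≤ (1 + ‖v a‖) * ∏ i ∈ s, (1 + ‖v i‖) := by nlinarith [ih k, norm_nonneg (v a)]

variable {F : Type*} [NormedField F]

theorem norm_coeff_basis_le {s : Finset ι} (v : ι → F) {i : ι} (hi : i ∈ s) (k : ℕ) :
    ‖(Lagrange.basis s v i).coeff k‖ ≤ ‖nodalWeight s v i‖ * ∏ j ∈ s.erase i, (1 + ‖v j‖) := by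
  rw [basis_eq_prod_sub_inv_mul_nodal_div hi, ← nodal_erase_eq_nodal_div hi, coeff_C_mul,
    norm_mul]
  gcongr
  exact norm_coeff_nodal_le _ _ _

theorem norm_coeff_le_sum_of_degree_lt {s : Finset ι} {v : ι → F} (hvs : Set.InjOn v s)
    {P : F[X]} (hP : P.degree < #s) (k : ℕ) :
    ‖P.coeff k‖ ≤ ∑ i ∈ s, ‖P.eval (v i)‖ * ‖(Lagrange.basis s v i).coeff k‖ := by
  conv_lhs => rw [eq_interpolate hvs hP, interpolate_apply, finsetSum_coeff]
  refine (norm_sum_le _ _).trans (sum_le_sum fun i _ => ?_)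
  rw [coeff_C_mul, norm_mul]

end Interpolation

section Fekete

variable {ι α : Type*} [Fintype ι] [DecidableEq ι]

def feketeEnergy [SeminormedAddCommGroup α] (x : ι → α) : ℝ :=
  ∏ i, ∏ k ∈ univ.erase i, ‖x i - x k‖

theorem continuous_feketeEnergy [SeminormedAddCommGroup α] :
    Continuous (feketeEnergy : (ι → α) → ℝ) := by
  unfold feketeEnergy; fun_prop

theorem feketeEnergy_pos_iff [NormedAddCommGroup α] {x : ι → α} :
    0 < feketeEnergy x ↔ Injective x := by
  refine ⟨fun h i k hik => by_contra fun hne => h.ne' ?_, fun h => prod_pos fun i _ =>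
    prod_pos fun k hk => norm_pos_iff.2 (sub_ne_zero.2 (h.ne (ne_of_mem_erase hk).symm))⟩
  exact prod_eq_zero (mem_univ i) (prod_eq_zero (mem_erase.2 ⟨Ne.symm hne, mem_univ k⟩)
    (by simp [hik]))

theorem feketeEnergy_update [SeminormedAddCommGroup α] (x : ι → α) (j : ι) (y : α) :
    feketeEnergy (update x j y) = (∏ k ∈ univ.erase j, ‖y - x k‖) ^ 2 *
      ∏ i ∈ univ.erase j, ∏ k ∈ (univ.erase i).erase j, ‖x i - x k‖ := by
  have hj : ∏ k ∈ univ.erase j, ‖update x j y j - update x j y k‖ =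
      ∏ k ∈ univ.erase j, ‖y - x k‖ :=
    prod_congr rfl fun k hk => by rw [update_self, update_of_ne (ne_of_mem_erase hk)]
  have hi : ∀ i ∈ univ.erase j, ∏ k ∈ univ.erase i, ‖update x j y i - update x j y k‖ =
      ‖y - x i‖ * ∏ k ∈ (univ.erase i).erase j, ‖x i - x k‖ := by
    intro i hi
    have hij := ne_of_mem_erase hi
    rw [← mul_prod_erase _ _ (mem_erase.2 ⟨hij.symm, mem_univ j⟩), update_self,
      update_of_ne hij, norm_sub_rev]
    refine congrArg _ (prod_congr rfl fun k hk => ?_)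
    rw [update_of_ne (ne_of_mem_erase hk)]
  rw [feketeEnergy, ← mul_prod_erase univ _ (mem_univ j), hj, prod_congr rfl hi,
    prod_mul_distrib]
  ring

theorem prod_norm_sub_le_of_isMaxOn_feketeEnergy [SeminormedAddCommGroup α] {E : Set α}
    {x : ι → α} (hx : x ∈ Set.univ.pi fun _ => E)
    (hmax : IsMaxOn feketeEnergy (Set.univ.pi fun _ => E) x) (hpos : 0 < feketeEnergy x)
    (j : ι) {y : α} (hy : y ∈ E) :
    ∏ k ∈ univ.erase j, ‖y - x k‖ ≤ ∏ k ∈ univ.erase j, ‖x j - x k‖ := by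
  have hle : feketeEnergy (update x j y) ≤ feketeEnergy x :=
    hmax ((Set.update_mem_pi_iff_of_mem hx).2 fun _ => hy)
  have hx' := feketeEnergy_update x j (x j)
  rw [update_eq_self] at hx'
  rw [feketeEnergy_update, hx'] at hle
  rw [hx'] at hpos
  have hG := pos_of_mul_pos_right hpos (sq_nonneg _)
  exact (pow_le_pow_iff_left₀ (prod_nonneg fun _ _ => norm_nonneg _)
    (prod_nonneg fun _ _ => norm_nonneg _) two_ne_zero).1 (le_of_mul_le_mul_right hle hG)

theorem exists_fekete_points [NormedAddCommGroup α] {E : Set α} (hE : IsCompact E)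
    (hinf : E.Infinite) : ∃ x : ι → α, (∀ i, x i ∈ E) ∧ Injective x ∧
      ∀ j, ∀ y ∈ E, ∏ k ∈ univ.erase j, ‖y - x k‖ ≤ ∏ k ∈ univ.erase j, ‖x j - x k‖ := by
  obtain ⟨x₀, hx₀E, hx₀⟩ : ∃ x₀ : ι → α, (∀ i, x₀ i ∈ E) ∧ Injective x₀ := by
    let e := (Fintype.equivFin ι).toEmbedding.trans (Fin.valEmbedding.trans hinf.natEmbedding)
    exact ⟨fun i => e i, fun i => (e i).2, Subtype.val_injective.comp e.injective⟩
  obtain ⟨x, hxE, hmax⟩ := (isCompact_univ_pi fun _ => hE).exists_isMaxOn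
    ⟨x₀, fun i _ => hx₀E i⟩ continuous_feketeEnergy.continuousOn
  have hpos : 0 < feketeEnergy x :=
    (feketeEnergy_pos_iff.2 hx₀).trans_le (hmax fun i _ => hx₀E i)
  exact ⟨x, fun i => hxE i trivial, feketeEnergy_pos_iff.1 hpos,
    fun j y hy => prod_norm_sub_le_of_isMaxOn_feketeEnergy hxE hmax hpos j hy⟩

end Fekete

section Potential

variable {μ : Measure ℂ} {E : Set ℂ} {M : ℝ}

theorem exists_isProbabilityMeasure_logPotential_le_of_logCap_pos (hcap : 0 < logCap E) :
    ∃ μ : Measure ℂ, IsProbabilityMeasure μ ∧ (∀ᵐ ζ ∂μ, ζ ∈ E) ∧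
      ∃ M : ℝ, ∀ z, logPotential μ z ≤ M := by
  have hlt : robinConst E < ⊤ := by
    have := EReal.zero_lt_exp_iff.1 hcap
    rwa [bot_lt_iff_ne_bot, Ne, EReal.neg_eq_bot_iff, ← Ne, ← lt_top_iff_ne_top] at this
  simp only [robinConst, iInf_lt_iff] at hlt
  obtain ⟨μ, hμ, hμE, hlt⟩ := hlt
  obtain ⟨M, hM, -⟩ := EReal.exists_between_coe_real hlt
  exact ⟨μ, hμ, mem_ae_iff.2 hμE, M, fun z => (le_iSup _ z).trans hM.le⟩

theorem integral_min_neg_log_le_of_logPotential_le {z : ℂ} (h : logPotential μ z ≤ M) (N : ℕ) :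
    ∫ ζ, min (N : ℝ) (-Real.log ‖z - ζ‖) ∂μ ≤ M := by
  have := (le_iSup (fun N : ℕ =>
    ((∫ ζ, min (N : ℝ) (Real.log (1 / ‖z - ζ‖)) ∂μ : ℝ) : EReal)) N).trans h
  simpa only [one_div, Real.log_inv, EReal.coe_le_coe_iff] using this

theorem integrable_min_neg_log_norm_sub [IsFiniteMeasure μ] (hμE : ∀ᵐ ζ ∂μ, ζ ∈ E) {z : ℂ}
    {L : ℝ} (hL : ∀ ζ ∈ E, Real.log ‖z - ζ‖ ≤ L) (N : ℝ) :
    Integrable (fun ζ => min N (-Real.log ‖z - ζ‖)) μ := by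
  refine Integrable.of_bound (Measurable.aestronglyMeasurable (by fun_prop)) (|N| + |L|) ?_
  filter_upwards [hμE] with ζ hζ
  rw [Real.norm_eq_abs, abs_le]
  have := hL ζ hζ
  constructor
  · exact le_min (by linarith [neg_abs_le N, abs_nonneg L])
      (by linarith [le_abs_self L, abs_nonneg N])
  · exact (min_le_left _ _).trans (by linarith [le_abs_self N, abs_nonneg L])

/-- An atom of mass `c` at `a` makes the potential at points `z` near `a` at least
`c * log (1 / ‖z - a‖)` minus a constant. (At `z = a` itself the atom is invisible, since
`log (1 / 0) = 0`.) -/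
theorem measure_singleton_eq_zero_of_logPotential_le [IsProbabilityMeasure μ]
    (hμE : ∀ᵐ ζ ∂μ, ζ ∈ E) (hE : Bornology.IsBounded E) (hM : ∀ z, logPotential μ z ≤ M)
    (a : ℂ) : μ {a} = 0 := by
  by_contra hc
  have hc : 0 < μ.real {a} := ENNReal.toReal_pos hc (measure_ne_top μ _)
  set L := Metric.diam (E ∪ Metric.closedBall a 1)
  set t := (|M| + L + 1) / μ.real {a}
  have ht : 0 ≤ t := by positivity
  set z : ℂ := a + (Real.exp (-t) : ℝ)
  have hza : ‖z - a‖ = Real.exp (-t) := by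
    rw [add_sub_cancel_left, Complex.norm_real, Real.norm_of_nonneg (Real.exp_pos _).le]
  have hz : z ∈ Metric.closedBall a 1 := by
    rw [Metric.mem_closedBall, dist_eq_norm, hza]
    exact Real.exp_le_one_iff.2 (neg_nonpos.2 ht)
  have hL : ∀ ζ ∈ E, Real.log ‖z - ζ‖ ≤ L := fun ζ hζ =>
    log_norm_sub_le_diam (hE.union Metric.isBounded_closedBall) (Or.inr hz) (Or.inl hζ)
  have hL0 : 0 ≤ L := Metric.diam_nonneg
  set N := ⌈t⌉₊
  have hg : ∀ᵐ ζ ∂μ,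
      ({a} : Set ℂ).indicator (fun _ => t) ζ - L ≤ min (N : ℝ) (-Real.log ‖z - ζ‖) := by
    filter_upwards [hμE] with ζ hζ
    by_cases hζa : ζ = a
    · rw [hζa, Set.indicator_of_mem (Set.mem_singleton a), hza, Real.log_exp, neg_neg]
      exact (sub_le_self _ hL0).trans_eq (min_eq_right (Nat.le_ceil t)).symm
    · rw [Set.indicator_of_notMem (Set.notMem_singleton_iff.2 hζa), zero_sub]
      exact le_min (by linarith [N.cast_nonneg (α := ℝ)]) (neg_le_neg (hL ζ hζ))
  have : μ.real {a} * t - L ≤ M := calc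
    μ.real {a} * t - L = ∫ ζ, ({a} : Set ℂ).indicator (fun _ => t) ζ - L ∂μ := by
      rw [integral_sub ((integrable_const t).indicator (measurableSet_singleton a))
        (integrable_const L), integral_indicator_const _ (measurableSet_singleton a)]
      simp
    _ ≤ ∫ ζ, min (N : ℝ) (-Real.log ‖z - ζ‖) ∂μ :=
      integral_mono_ae (((integrable_const t).indicator (measurableSet_singleton a)).sub
        (integrable_const L)) (integrable_min_neg_log_norm_sub hμE hL _) hg
    _ ≤ M := integral_min_neg_log_le_of_logPotential_le (hM z) N
  rw [mul_div_cancel₀ _ hc.ne'] at this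
  linarith [le_abs_self M]

theorem exp_neg_card_mul_le_of_prod_norm_sub_le [IsProbabilityMeasure μ] [NullSingletonClass μ]
    (hμE : ∀ᵐ ζ ∂μ, ζ ∈ E) (hE : Bornology.IsBounded E) (hM : ∀ z, logPotential μ z ≤ M)
    {ι : Type*} {s : Finset ι} {x : ι → ℂ} (hx : ∀ i ∈ s, x i ∈ E) {d : ℝ} (hd : 0 < d)
    (hprod : ∀ ζ ∈ E, ∏ i ∈ s, ‖ζ - x i‖ ≤ d) : Real.exp (-(#s * M)) ≤ d := by
  set L := Metric.diam E
  have hL : ∀ i ∈ s, ∀ ζ ∈ E, Real.log ‖x i - ζ‖ ≤ L := fun i hi ζ hζ =>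
    log_norm_sub_le_diam hE (hx i hi) hζ
  have hint : ∀ i ∈ s, ∀ N : ℝ, Integrable (fun ζ => min N (-Real.log ‖x i - ζ‖)) μ :=
    fun i hi => integrable_min_neg_log_norm_sub hμE (hL i hi)
  have key (N : ℕ) : min (N - #s * L) (-Real.log d) ≤ #s * M := calc
    min (N - #s * L) (-Real.log d) = ∫ _, min (N - #s * L) (-Real.log d) ∂μ := by simp
    _ ≤ ∫ ζ, ∑ i ∈ s, min (N : ℝ) (-Real.log ‖x i - ζ‖) ∂μ := by
      refine integral_mono_ae (integrable_const _) (integrable_finsetSum _ fun i hi =>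
        hint i hi N) ?_
      filter_upwards [hμE, ((s.finite_toSet.image x).countable.ae_notMem μ)] with ζ hζ hζx
      exact min_sub_card_mul_le_sum_min_neg_log N.cast_nonneg Metric.diam_nonneg
        (fun i hi => hL i hi ζ hζ) (fun i hi h => hζx ⟨i, hi, h⟩) (hprod ζ hζ)
    _ = ∑ i ∈ s, ∫ ζ, min (N : ℝ) (-Real.log ‖x i - ζ‖) ∂μ :=
      integral_finsetSum _ fun i hi => hint i hi N
    _ ≤ ∑ _ ∈ s, M := sum_le_sum fun i _ => integral_min_neg_log_le_of_logPotential_le (hM _) N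
    _ = #s * M := by simp
  obtain ⟨N, hN⟩ := exists_nat_gt (#s * L + #s * M)
  have hlog : -(#s * M) ≤ Real.log d := by
    rcases min_le_iff.1 (key N) with h | h <;> linarith
  exact (Real.exp_le_exp.2 hlog).trans_eq (Real.exp_log hd)

theorem norm_nodalWeight_le_of_fekete [IsProbabilityMeasure μ] [NullSingletonClass μ]
    (hμE : ∀ᵐ ζ ∂μ, ζ ∈ E) (hE : Bornology.IsBounded E) (hM : ∀ z, logPotential μ z ≤ M)
    {ι : Type*} [Fintype ι] [DecidableEq ι] {x : ι → ℂ} (hx : ∀ i, x i ∈ E) (hinj : Injective x)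
    (hfek : ∀ j, ∀ y ∈ E, ∏ k ∈ univ.erase j, ‖y - x k‖ ≤ ∏ k ∈ univ.erase j, ‖x j - x k‖)
    (i : ι) : ‖nodalWeight univ x i‖ ≤ Real.exp M ^ #(univ.erase i) := by
  have hd : 0 < ∏ k ∈ univ.erase i, ‖x i - x k‖ := prod_pos fun k hk =>
    norm_pos_iff.2 (sub_ne_zero.2 (hinj.ne (ne_of_mem_erase hk).symm))
  calc ‖nodalWeight univ x i‖ = (∏ k ∈ univ.erase i, ‖x i - x k‖)⁻¹ := by
        simp [nodalWeight, prod_inv_distrib]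
    _ ≤ (Real.exp (-(#(univ.erase i) * M)))⁻¹ := inv_anti₀ (Real.exp_pos _)
        (exp_neg_card_mul_le_of_prod_norm_sub_le hμE hE hM (fun k _ => hx k) hd (hfek i))
    _ = Real.exp M ^ #(univ.erase i) := by rw [Real.exp_neg, inv_inv, Real.exp_nat_mul]

theorem norm_coeff_basis_le_of_fekete [IsProbabilityMeasure μ] [NullSingletonClass μ]
    (hμE : ∀ᵐ ζ ∂μ, ζ ∈ E) (hE : Bornology.IsBounded E) (hM : ∀ z, logPotential μ z ≤ M)
    {R : ℝ} (hR : ∀ z ∈ E, ‖z‖ ≤ R) {ι : Type*} [Fintype ι] [DecidableEq ι] {x : ι → ℂ}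
    (hx : ∀ i, x i ∈ E) (hinj : Injective x)
    (hfek : ∀ j, ∀ y ∈ E, ∏ k ∈ univ.erase j, ‖y - x k‖ ≤ ∏ k ∈ univ.erase j, ‖x j - x k‖)
    (i : ι) (k : ℕ) :
    ‖(Lagrange.basis univ x i).coeff k‖ ≤ (Real.exp M * (1 + R)) ^ #(univ.erase i) := by
  rw [mul_pow]
  refine (norm_coeff_basis_le x (mem_univ i) k).trans (mul_le_mul ?_ ?_ (by positivity)
    (by positivity))
  · exact norm_nodalWeight_le_of_fekete hμE hE hM hx hinj hfek i
  · refine (prod_le_prod (fun _ _ => by positivity) fun j _ => ?_).trans_eq (prod_const _)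
    gcongr
    exact hR _ (hx j)

end Potential

/-- Bernstein inequality: if `E` is compact with positive capacity, there is
`C = C_E > 0` such that every polynomial `P` of degree at most `n` (for every
positive integer `n`) has all its coefficients bounded by `C^n · max_E |P|`. -/
theorem bernstein_inequality (E : Set ℂ) (hE : IsCompact E) (hcap : 0 < logCap E) :
    ∃ C : ℝ, 0 < C ∧ ∀ n : ℕ, 0 < n → ∀ P : Polynomial ℂ, P.natDegree ≤ n →
      ∀ k : ℕ, ‖P.coeff k‖ ≤ C ^ n * sSup ((fun z => ‖P.eval z‖) '' E) := by
  obtain ⟨μ, _, hμE, M, hM⟩ := exists_isProbabilityMeasure_logPotential_le_of_logCap_pos hcap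
  have : NullSingletonClass μ :=
    ⟨measure_singleton_eq_zero_of_logPotential_le hμE hE.isBounded hM⟩
  obtain ⟨R, hR0, hR⟩ := hE.isBounded.exists_pos_norm_le
  refine ⟨2 * (Real.exp M * (1 + R)), by positivity, fun n _ P hP k => ?_⟩
  obtain ⟨x, hxE, hinj, hfek⟩ :=
    exists_fekete_points (ι := Fin (n + 1)) hE (Set.infinite_of_ae_mem hμE)
  set S := sSup ((fun z => ‖P.eval z‖) '' E)
  have hS (i : Fin (n + 1)) : ‖P.eval (x i)‖ ≤ S :=
    le_csSup (hE.image P.continuous.norm).bddAbove ⟨_, hxE i, rfl⟩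
  have hbasis (i : Fin (n + 1)) :
      ‖(Lagrange.basis univ x i).coeff k‖ ≤ (Real.exp M * (1 + R)) ^ n := by
    simpa using norm_coeff_basis_le_of_fekete hμE hE.isBounded hM hR hxE hinj hfek i k
  have hdeg : P.degree < #(univ : Finset (Fin (n + 1))) := by
    rw [card_univ, Fintype.card_fin]
    exact degree_le_natDegree.trans_lt (by exact_mod_cast Nat.lt_succ_of_le hP)
  calc ‖P.coeff k‖ ≤ ∑ i, ‖P.eval (x i)‖ * ‖(Lagrange.basis univ x i).coeff k‖ :=
        norm_coeff_le_sum_of_degree_lt hinj.injOn hdeg k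
    _ ≤ ∑ _ : Fin (n + 1), S * (Real.exp M * (1 + R)) ^ n := by
        gcongr with i
        exacts [(norm_nonneg _).trans (hS 0), hS i, hbasis i]
    _ = (n + 1) * (Real.exp M * (1 + R)) ^ n * S := by
        rw [sum_const, card_univ, Fintype.card_fin, nsmul_eq_mul]; push_cast; ring
    _ ≤ 2 ^ n * (Real.exp M * (1 + R)) ^ n * S := by
        gcongr
        exacts [(norm_nonneg _).trans (hS 0), mod_cast n.lt_two_pow_self]
    _ = (2 * (Real.exp M * (1 + R))) ^ n * S := by rw [← mul_pow]
end

section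
/- Let P(t,y) = y^m + a₁(t)y^{m−1} + ⋯ + a_m(t) be a monic polynomial in y whose coefficients a_j(t) are convergent power series in t, and let h(t) be a formal power series with P(t, h(t)) = 0 in ℂ[[t]]. Then h(t) is convergent. -/
/-!
Measure a power series `f` by the truncated weighted norms `∑_{n<N} ‖f_n‖ rⁿ`. They are
submultiplicative, and `f` converges iff for all small `r > 0` they are bounded uniformly in `N`,
so convergent series form a subalgebra `𝒪` (`convergentSeries`) of `ℂ⟦X⟧`. If
`g = U + X * F(g)` with `U` and the coefficients of the polynomial `F` in `𝒪`, then `g ∈ 𝒪`: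
the factor `X` turns a bound on the first `N` coefficients of `g` into one on the first `N + 1`,
once `r` is small.

A root `h` of `q ∈ 𝒪[Y]` at which `q'(h)` has order `v` is brought to this form (Artin's trick):
write `h = τ + X^(v+1) g` with `τ` a polynomial, expand `q` at `τ` and divide by `X^(2v+1)`.
Finally, a root of a monic polynomial over `𝒪` is a simple root of one of its iterated
derivatives, since the last of them is a nonzero constant.
-/

/-- Convergence of a one-variable formal power series: geometric coefficient
bounds (equivalently, positive radius of convergence). -/
def ConvPS (h : PowerSeries ℂ) : Prop :=
  ∃ C : ℝ, ∀ p : ℕ, p ≠ 0 → ‖PowerSeries.coeff (R := ℂ) p h‖ ≤ C ^ p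

open scoped Polynomial

namespace Polynomial

variable {R S : Type*} [CommRing R] [CommRing S] [Algebra R S]

theorem aeval_taylor (p : R[X]) (r : R) (y : S) :
    aeval y (taylor r p) = aeval (y + algebraMap R S r) p := by
  rw [aeval_def, eval₂_eq_eval_map, map_taylor, taylor_eval, ← eval₂_eq_eval_map,
    ← aeval_def]

theorem exists_aeval_algebraMap_add_eq (p : R[X]) (r : R) :
    ∃ T : R[X], ∀ y : S, aeval (algebraMap R S r + y) p =
      aeval (algebraMap R S r) p + aeval (algebraMap R S r) (derivative p) * y +
        y ^ 2 * aeval y T := by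
  set T := (taylor r p).divX.divX
  have hT : taylor r p = X * (X * T + C ((derivative p).eval r)) + C (p.eval r) := by
    rw [← taylor_coeff_one, ← coeff_divX, X_mul_divX_add, ← taylor_coeff_zero, X_mul_divX_add]
  refine ⟨T, fun y => ?_⟩
  rw [add_comm, ← aeval_taylor, hT]
  simp only [map_add, map_mul, aeval_X, aeval_C, aeval_algebraMap_apply_eq_algebraMap_eval]
  ring

theorem sub_dvd_aeval_sub (x y : S) (p : R[X]) : x - y ∣ aeval x p - aeval y p := by
  simpa only [aeval_def, eval₂_eq_eval_map] using sub_dvd_eval_sub x y (p.map (algebraMap R S))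

theorem Monic.aeval_iterate_derivative_natDegree {p : R[X]} (hp : p.Monic) (x : S) :
    aeval x (derivative^[p.natDegree] p) = p.natDegree.factorial := by
  rw [eq_C_of_natDegree_le_zero ((natDegree_iterate_derivative p _).trans (Nat.sub_self _).le),
    coeff_iterate_derivative, zero_add, Nat.descFactorial_self, hp.coeff_natDegree, aeval_C,
    nsmul_one, map_natCast]

end Polynomial

theorem Subalgebra.aeval_mem_of_mem {R A : Type*} [CommSemiring R] [CommSemiring A] [Algebra R A]
    (S : Subalgebra R A) (p : S[X]) {x : A} (hx : x ∈ S) : Polynomial.aeval x p ∈ S := by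
  rw [show x = algebraMap S A ⟨x, hx⟩ from rfl,
    Polynomial.aeval_algebraMap_apply_eq_algebraMap_eval]
  exact (p.eval _).2

open PowerSeries Filter Topology Finset

theorem sum_range_cauchy_product_le {a b : ℕ → ℝ} (ha : ∀ i, 0 ≤ a i) (hb : ∀ j, 0 ≤ b j)
    (N : ℕ) : ∑ n ∈ range N, ∑ i ∈ range (n + 1), a i * b (n - i) ≤
      (∑ i ∈ range N, a i) * ∑ j ∈ range N, b j := by
  rw [sum_range_diag_flip N fun i j => a i * b j, sum_mul_sum]
  exact sum_le_sum fun i _ => sum_le_sum_of_subset_of_nonneg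
    (range_subset_range.2 (Nat.sub_le N i)) fun j _ _ => mul_nonneg (ha i) (hb j)

section truncNorm

noncomputable def truncNorm (r : ℝ) (N : ℕ) (f : ℂ⟦X⟧) : ℝ :=
  ∑ n ∈ range N, ‖coeff n f‖ * r ^ n

variable {r : ℝ} (N : ℕ) (f g : ℂ⟦X⟧)

theorem truncNorm_sum_le {ι : Type*} (s : Finset ι) (φ : ι → ℂ⟦X⟧) (hr : 0 ≤ r) :
    truncNorm r N (∑ i ∈ s, φ i) ≤ ∑ i ∈ s, truncNorm r N (φ i) := by
  simp only [truncNorm]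
  rw [sum_comm]
  gcongr with n
  rw [map_sum, ← sum_mul]
  gcongr
  exact norm_sum_le _ _

theorem truncNorm_mul_le (hr : 0 ≤ r) :
    truncNorm r N (f * g) ≤ truncNorm r N f * truncNorm r N g := by
  refine le_trans (sum_le_sum fun n _ => ?_) (sum_range_cauchy_product_le
    (a := fun i => ‖coeff i f‖ * r ^ i) (b := fun j => ‖coeff j g‖ * r ^ j)
    (fun _ => by positivity) (fun _ => by positivity) N)
  rw [coeff_mul, Nat.sum_antidiagonal_eq_sum_range_succ_mk]
  refine (mul_le_mul_of_nonneg_right (norm_sum_le _ _) (by positivity)).trans_eq ?_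
  rw [sum_mul]
  refine sum_congr rfl fun i hi => ?_
  rw [norm_mul, ← Nat.add_sub_cancel' (mem_range_succ_iff.1 hi), pow_add,
    Nat.add_sub_cancel_left]
  ring

theorem truncNorm_succ_X_mul : truncNorm r (N + 1) (X * f) = r * truncNorm r N f := by
  simp only [truncNorm, sum_range_succ', coeff_succ_X_mul, coeff_zero_X_mul, norm_zero, zero_mul,
    add_zero, mul_sum, pow_succ]
  exact sum_congr rfl fun _ _ => by ring

theorem truncNorm_nonneg (hr : 0 ≤ r) : 0 ≤ truncNorm r N f :=
  sum_nonneg fun _ _ => by positivity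

theorem truncNorm_add_le (hr : 0 ≤ r) :
    truncNorm r N (f + g) ≤ truncNorm r N f + truncNorm r N g := by
  simpa using truncNorm_sum_le N {0, 1} ![f, g] hr

@[simp]
theorem truncNorm_zero : truncNorm r 0 f = 0 := by simp [truncNorm]

theorem truncNorm_one_le : truncNorm r N 1 ≤ 1 := by
  cases N <;> simp [truncNorm, coeff_one, sum_range_succ']

theorem truncNorm_pow_le (hr : 0 ≤ r) (k : ℕ) :
    truncNorm r N (f ^ k) ≤ truncNorm r N f ^ k := by
  induction k with
  | zero => simpa using truncNorm_one_le N
  | succ k ih =>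
    rw [pow_succ, pow_succ]
    exact (truncNorm_mul_le N _ _ hr).trans
      (mul_le_mul_of_nonneg_right ih (truncNorm_nonneg N f hr))

theorem truncNorm_aeval_le {A : Type*} [CommSemiring A] [Algebra A ℂ⟦X⟧] (F : A[X])
    (hr : 0 ≤ r) :
    truncNorm r N (Polynomial.aeval g F) ≤ ∑ k ∈ range (F.natDegree + 1),
      truncNorm r N (algebraMap A ℂ⟦X⟧ (F.coeff k)) * truncNorm r N g ^ k := by
  rw [Polynomial.aeval_eq_sum_range]
  refine (truncNorm_sum_le N _ _ hr).trans (sum_le_sum fun k _ => ?_)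
  rw [Algebra.smul_def]
  exact (truncNorm_mul_le N _ _ hr).trans
    (mul_le_mul_of_nonneg_left (truncNorm_pow_le N g hr k) (truncNorm_nonneg N _ hr))

end truncNorm

theorem ConvPS.eventually_truncNorm_le {f : ℂ⟦X⟧} (hf : ConvPS f) :
    ∃ K, ∀ᶠ r in 𝓝[>] 0, ∀ N, truncNorm r N f ≤ K := by
  obtain ⟨C, hC⟩ := hf
  refine ⟨(‖coeff 0 f‖ + 1) * 2, ?_⟩
  filter_upwards [Ioo_mem_nhdsGT (show (0 : ℝ) < 1 / (2 * (|C| + 1)) by positivity)]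
    with r ⟨hr0, hr⟩ N
  have hCr : |C| * r ≤ 1 / 2 := by
    have := (lt_div_iff₀ (by positivity)).1 hr
    nlinarith [abs_nonneg C]
  have hterm (n : ℕ) : ‖coeff n f‖ * r ^ n ≤ (‖coeff 0 f‖ + 1) * (1 / 2) ^ n := by
    rcases eq_or_ne n 0 with rfl | hn
    · simp
    calc ‖coeff n f‖ * r ^ n ≤ |C| ^ n * r ^ n := by
          gcongr; exact (hC n hn).trans ((le_abs_self _).trans (abs_pow C n).le)
      _ = (|C| * r) ^ n := (mul_pow _ _ _).symm
      _ ≤ (1 / 2) ^ n := pow_le_pow_left₀ (by positivity) hCr n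
      _ ≤ _ := le_mul_of_one_le_left (by positivity) (by simp)
  calc truncNorm r N f ≤ ∑ n ∈ range N, (‖coeff 0 f‖ + 1) * (1 / 2) ^ n :=
        sum_le_sum fun n _ => hterm n
    _ ≤ (‖coeff 0 f‖ + 1) * 2 := by
        rw [← mul_sum]; gcongr; exact sum_geometric_two_le N

theorem ConvPS.of_truncNorm_le {f : ℂ⟦X⟧} {r K : ℝ} (hr : 0 < r)
    (hK : ∀ N, truncNorm r N f ≤ K) : ConvPS f := by
  refine ⟨max K 1 / r, fun n hn => ?_⟩
  rw [div_pow, le_div_iff₀ (by positivity)]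
  calc ‖coeff n f‖ * r ^ n ≤ truncNorm r (n + 1) f :=
        single_le_sum (f := fun n => ‖coeff n f‖ * r ^ n) (fun _ _ => by positivity)
          (self_mem_range_succ n)
    _ ≤ max K 1 := (hK _).trans (le_max_left K 1)
    _ ≤ max K 1 ^ n := le_self_pow₀ (le_max_right K 1) hn

theorem ConvPS.add {f g : ℂ⟦X⟧} (hf : ConvPS f) (hg : ConvPS g) : ConvPS (f + g) := by
  obtain ⟨K, hK⟩ := hf.eventually_truncNorm_le
  obtain ⟨L, hL⟩ := hg.eventually_truncNorm_le
  obtain ⟨r, ⟨hKr, hLr⟩, hr⟩ := ((hK.and hL).and self_mem_nhdsWithin).exists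
  exact .of_truncNorm_le hr fun N =>
    (truncNorm_add_le N f g hr.le).trans (add_le_add (hKr N) (hLr N))

theorem ConvPS.mul {f g : ℂ⟦X⟧} (hf : ConvPS f) (hg : ConvPS g) : ConvPS (f * g) := by
  obtain ⟨K, hK⟩ := hf.eventually_truncNorm_le
  obtain ⟨L, hL⟩ := hg.eventually_truncNorm_le
  obtain ⟨r, ⟨hKr, hLr⟩, hr⟩ := ((hK.and hL).and self_mem_nhdsWithin).exists
  exact .of_truncNorm_le hr fun N => (truncNorm_mul_le N f g hr.le).trans <|
    mul_le_mul (hKr N) (hLr N) (truncNorm_nonneg N g hr.le)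
      ((truncNorm_nonneg N f hr.le).trans (hKr N))

theorem ConvPS.of_X_mul {f : ℂ⟦X⟧} (hf : ConvPS (X * f)) : ConvPS f := by
  obtain ⟨K, hK⟩ := hf.eventually_truncNorm_le
  obtain ⟨r, hKr, hr⟩ := (hK.and self_mem_nhdsWithin).exists
  refine .of_truncNorm_le hr (K := K / r) fun N => ?_
  rw [le_div_iff₀ hr, mul_comm, ← truncNorm_succ_X_mul]
  exact hKr (N + 1)

theorem ConvPS.of_X_pow_mul {f : ℂ⟦X⟧} {k : ℕ} (hf : ConvPS (X ^ k * f)) : ConvPS f := by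
  induction k generalizing f with
  | zero => simpa using hf
  | succ k ih => exact (ih (by rwa [pow_succ, mul_assoc] at hf)).of_X_mul

theorem ConvPS.eventually_forall_truncNorm_le (s : Finset ℂ⟦X⟧) (hs : ∀ f ∈ s, ConvPS f) :
    ∃ K, ∀ᶠ r in 𝓝[>] 0, ∀ f ∈ s, ∀ N, truncNorm r N f ≤ K := by
  classical
  induction s using Finset.induction_on with
  | empty => exact ⟨0, by simp⟩
  | insert a s _ ih =>
    obtain ⟨K, hK⟩ := (hs a (mem_insert_self a s)).eventually_truncNorm_le
    obtain ⟨L, hL⟩ := ih fun f hf => hs f (mem_insert_of_mem hf)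
    refine ⟨max K L, (hK.and hL).mono fun r ⟨hKr, hLr⟩ f hf N => ?_⟩
    rcases mem_insert.1 hf with rfl | hf
    · exact (hKr N).trans (le_max_left K L)
    · exact (hLr f hf N).trans (le_max_right K L)

theorem convPS_C (c : ℂ) : ConvPS (C c) := ⟨0, fun p hp => by simp [coeff_C, hp]⟩

theorem convPS_X : ConvPS X := ⟨1, fun p _ => by rw [coeff_X]; split_ifs <;> simp⟩

def convergentSeries : Subalgebra ℂ ℂ⟦X⟧ where
  carrier := {f | ConvPS f}
  mul_mem' := ConvPS.mul
  add_mem' := ConvPS.add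
  algebraMap_mem' := convPS_C

theorem X_mem_convergentSeries : X ∈ convergentSeries := convPS_X

theorem coe_mem_convergentSeries (p : ℂ[X]) : (p : ℂ⟦X⟧) ∈ convergentSeries := by
  induction p using Polynomial.induction_on' with
  | add p q hp hq => simpa using add_mem hp hq
  | monomial n c =>
    simpa [← Polynomial.C_mul_X_pow_eq_monomial] using
      mul_mem (convPS_C c) (pow_mem X_mem_convergentSeries n)

theorem mem_convergentSeries_of_eq_add_X_mul_aeval {U g : ℂ⟦X⟧} (F : convergentSeries[X])
    (hU : U ∈ convergentSeries) (hg : g = U + X * Polynomial.aeval g F) :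
    g ∈ convergentSeries := by
  classical
  let coeffs := (range (F.natDegree + 1)).image fun k => (F.coeff k : ℂ⟦X⟧)
  obtain ⟨K, hK⟩ := ConvPS.eventually_forall_truncNorm_le (insert U coeffs) fun f hf => by
    rcases mem_insert.1 hf with rfl | hf
    · exact hU
    · obtain ⟨k, -, rfl⟩ := mem_image.1 hf
      exact (F.coeff k).2
  have hK0 : 0 ≤ K := by
    obtain ⟨r, hr⟩ := hK.exists
    simpa using hr U (mem_insert_self U _) 0
  set S := ∑ k ∈ range (F.natDegree + 1), (2 * K) ^ k
  have hS : 0 < S := sum_pos' (fun k _ => by positivity) ⟨0, by simp, by simp⟩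
  obtain ⟨r, hKr, hr, hrS⟩ := (hK.and (Ioo_mem_nhdsGT (one_div_pos.2 hS))).exists
  have hrS' : r * S ≤ 1 := ((lt_div_iff₀ hS).1 hrS).le
  have hbound (N : ℕ) : truncNorm r N g ≤ 2 * K := by
    induction N with
    | zero => simpa using hK0
    | succ N ih =>
      rw [hg]
      calc truncNorm r (N + 1) (U + X * Polynomial.aeval g F)
          ≤ truncNorm r (N + 1) U + r * truncNorm r N (Polynomial.aeval g F) := by
            rw [← truncNorm_succ_X_mul]; exact truncNorm_add_le _ _ _ hr.le
        _ ≤ K + r * ∑ k ∈ range (F.natDegree + 1), K * (2 * K) ^ k := by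
            gcongr
            · exact hKr U (mem_insert_self U _) _
            · refine (truncNorm_aeval_le N g F hr.le).trans (sum_le_sum fun k hk => ?_)
              exact mul_le_mul (hKr _ (mem_insert_of_mem (mem_image_of_mem _ hk)) N)
                (pow_le_pow_left₀ (truncNorm_nonneg _ _ hr.le) ih k)
                (pow_nonneg (truncNorm_nonneg _ _ hr.le) k) hK0
        _ = K + K * (r * S) := by rw [← mul_sum]; ring
        _ ≤ 2 * K := by nlinarith
  exact ConvPS.of_truncNorm_le hr hbound

theorem mem_convergentSeries_of_add_mul_add_X_mul_aeval_eq_zero {u w g : ℂ⟦X⟧}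
    (G : convergentSeries[X]) (hu : u ∈ convergentSeries) (hw : w ∈ convergentSeries)
    (hw0 : constantCoeff w ≠ 0) (h : u + w * g + X * Polynomial.aeval g G = 0) :
    g ∈ convergentSeries := by
  set c := constantCoeff w
  set w₁ := mk fun n => coeff (n + 1) w
  have hw₁ : w₁ ∈ convergentSeries := ConvPS.of_X_mul <| by
    rw [eq_sub_of_add_eq (eq_X_mul_shift_add_const w).symm]
    exact sub_mem hw (convPS_C c)
  have hc : C c⁻¹ * C c = 1 := by rw [← map_mul, inv_mul_cancel₀ hw0, map_one]
  refine mem_convergentSeries_of_eq_add_X_mul_aeval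
    (Polynomial.C ⟨C (-c⁻¹), convPS_C _⟩ * (Polynomial.C ⟨w₁, hw₁⟩ * Polynomial.X + G))
    (mul_mem (convPS_C c⁻¹) (neg_mem hu) : C c⁻¹ * -u ∈ convergentSeries) ?_
  simp only [map_mul, map_add, Polynomial.aeval_C, Polynomial.aeval_X, map_neg,
    Subalgebra.algebraMap_apply]
  linear_combination C c⁻¹ * h - C c⁻¹ * g * eq_X_mul_shift_add_const w - g * hc

theorem mem_convergentSeries_of_aeval_eq_zero_of_aeval_derivative_ne_zero
    {q : convergentSeries[X]} {h : ℂ⟦X⟧} (hq : Polynomial.aeval h q = 0)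
    (hq' : Polynomial.aeval h (Polynomial.derivative q) ≠ 0) : h ∈ convergentSeries := by
  set e := Polynomial.aeval h (Polynomial.derivative q)
  set v := e.order.toNat
  set τ : ℂ⟦X⟧ := ((trunc (v + 1) h : ℂ[X]) : ℂ⟦X⟧)
  have hτ : τ ∈ convergentSeries := coe_mem_convergentSeries _
  obtain ⟨g, hg⟩ : X ^ (v + 1) ∣ h - τ :=
    X_pow_dvd_iff.2 fun i hi => by simp [τ, coeff_trunc, hi]
  obtain ⟨c, hc⟩ : X ^ (v + 1) ∣ Polynomial.aeval τ (Polynomial.derivative q) - e := by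
    have : X ^ (v + 1) ∣ τ - h := by rw [← neg_sub, hg]; exact (dvd_mul_right _ _).neg_right
    exact this.trans (Polynomial.sub_dvd_aeval_sub τ h _)
  set w := e.divXPowOrder + X * c
  have hb₁ : Polynomial.aeval τ (Polynomial.derivative q) = X ^ v * w := by
    linear_combination hc - X_pow_order_mul_divXPowOrder (f := e)
  have hw : w ∈ convergentSeries :=
    ConvPS.of_X_pow_mul (hb₁ ▸ Subalgebra.aeval_mem_of_mem _ _ hτ)
  have hw0 : constantCoeff w ≠ 0 := by
    simpa [w, constantCoeff_divXPowOrder_eq_zero_iff] using hq'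
  obtain ⟨T, hT⟩ := Polynomial.exists_aeval_algebraMap_add_eq (S := ℂ⟦X⟧) q ⟨τ, hτ⟩
  let G : convergentSeries[X] := Polynomial.X ^ 2 *
    T.comp (Polynomial.C ⟨X ^ (v + 1), pow_mem X_mem_convergentSeries _⟩ * Polynomial.X)
  have hG : Polynomial.aeval g G = g ^ 2 * Polynomial.aeval (X ^ (v + 1) * g) T := by
    simp [G, Polynomial.aeval_comp]
  have hb₀ : X ^ (2 * v + 1) * -(w * g + X * Polynomial.aeval g G) = Polynomial.aeval τ q := by
    have := hT (h - τ)
    rw [Subalgebra.algebraMap_apply, add_sub_cancel, hq, hb₁, hg] at this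
    rw [hG]
    linear_combination this
  have hu : -(w * g + X * Polynomial.aeval g G) ∈ convergentSeries :=
    ConvPS.of_X_pow_mul (hb₀ ▸ Subalgebra.aeval_mem_of_mem _ q hτ)
  have hg' := mem_convergentSeries_of_add_mul_add_X_mul_aeval_eq_zero (g := g) G hu hw hw0
    (by ring)
  rw [← sub_add_cancel h τ, hg]
  exact add_mem (mul_mem (pow_mem X_mem_convergentSeries _) hg') hτ

theorem ConvPS.of_isIntegral {h : ℂ⟦X⟧} (hh : IsIntegral convergentSeries h) : ConvPS h := by
  obtain ⟨p, hp, hph⟩ := hh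
  by_contra hconv
  have hvanish (k : ℕ) : Polynomial.aeval h (Polynomial.derivative^[k] p) = 0 := by
    induction k with
    | zero => exact hph
    | succ k ih =>
      rw [Function.iterate_succ_apply']
      by_contra hne
      exact hconv (mem_convergentSeries_of_aeval_eq_zero_of_aeval_derivative_ne_zero ih hne)
  have := congrArg constantCoeff (hvanish p.natDegree)
  rw [hp.aeval_iterate_derivative_natDegree, map_natCast, map_zero] at this
  exact Nat.factorial_ne_zero _ (Nat.cast_eq_zero.1 this)

theorem root_of_monic_polynomial_convergent_general (m : ℕ)
    (a : ℕ → PowerSeries ℂ) (haconv : ∀ j, 1 ≤ j → j ≤ m → ConvPS (a j))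
    (h : PowerSeries ℂ)
    (hroot : h ^ m + ∑ j ∈ Finset.Icc 1 m, a j * h ^ (m - j) = 0) :
    ConvPS h := by
  let P : ℂ⟦X⟧[X] :=
    Polynomial.X ^ m + ∑ j ∈ Icc 1 m, Polynomial.C (a j) * Polynomial.X ^ (m - j)
  have hlifts : P ∈ Polynomial.lifts (algebraMap convergentSeries ℂ⟦X⟧) := by
    refine add_mem (Polynomial.X_pow_mem_lifts _ m)
      (sum_mem fun j hj => mul_mem ?_ (Polynomial.X_pow_mem_lifts _ _))
    obtain ⟨hj1, hjm⟩ := mem_Icc.1 hj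
    exact Polynomial.C_mem_lifts (algebraMap convergentSeries ℂ⟦X⟧) ⟨a j, haconv j hj1 hjm⟩
  have hmonic : P.Monic := by
    refine Polynomial.monic_X_pow_add ((Polynomial.degree_sum_le _ _).trans_lt
      ((Finset.sup_lt_iff (WithBot.bot_lt_coe m)).2 fun j hj => ?_))
    obtain ⟨hj1, hjm⟩ := mem_Icc.1 hj
    exact (Polynomial.degree_C_mul_X_pow_le _ _).trans_lt <| by
      rw [Nat.cast_withBot]; exact WithBot.coe_lt_coe.2 (by omega)
  obtain ⟨q, hq, -, hqm⟩ := Polynomial.lifts_and_natDegree_eq_and_monic hlifts hmonic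
  refine ConvPS.of_isIntegral ⟨q, hqm, ?_⟩
  rw [Polynomial.eval₂_eq_eval_map, hq]
  simpa [P, Polynomial.eval_finsetSum] using hroot

/-- If `P(t,y) = y^m + a₁(t) y^{m-1} + ⋯ + a_m(t)` is monic in `y` with
convergent power series coefficients, and the formal power series `h` satisfies
`P(t, h(t)) = 0`, then `h` is convergent. -/
theorem root_of_monic_polynomial_convergent (m : ℕ) (hm : 0 < m)
    (a : ℕ → PowerSeries ℂ) (haconv : ∀ j, 1 ≤ j → j ≤ m → ConvPS (a j))
    (h : PowerSeries ℂ)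
    (hroot : h ^ m + ∑ j ∈ Finset.Icc 1 m, a j * h ^ (m - j) = 0) :
    ConvPS h :=
  root_of_monic_polynomial_convergent_general m a haconv h hroot
end

section
/- Let h(x) be a convergent power series with h(0)=0 that is not a monomial of the form b_k x^k with σk = τ, where σ, τ are positive integers. Then the function u(x) = x^{−τ} h(x)^σ is a non-constant meromorphic function near 0, and for any small circle S = {|x| = r} (with r small enough that h is holomorphic on a neighborhood of {|x| ≤ r} and h(x) ≠ 0 for 0 < |x| ≤ r), the image F = u(S) is a compact subset of ℂ of positive logarithmic capacity. -/
/-!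
Write `h = x^k g` near `0` with `g(0) ≠ 0`. An identity `h^σ = c x^τ` near `0` forces `σk = τ`
(compare orders) and `g^σ = c`, so `g` is constant by the open mapping theorem and `h` is one of
the excluded monomials. If `u = x^{-τ} h^σ` were constant on the circle `S`, the identity theorem
(`S` accumulates at its own points) would give such an identity on the whole disc. Hence
`F = u(S)` is compact, connected and contains two points `a ≠ b`.

The orthogonal projection `p` onto the line through `a` and `b` is 1-Lipschitz and, `F` being
connected, maps `F` onto a segment of length `L = |b - a|`. Choosing above each point of the
segment the lowest point of `F` gives a measurable section; the push-forward of normalized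
Lebesgue measure along it is a probability measure on `F` all of whose truncated potentials are
at most `L⁻¹ ∫ log⁺ |t|⁻¹ dt < ∞`, since `|z - ζ| ≥ |p z - p ζ|`. So the Robin constant of `F` is
finite.
-/

open MeasureTheory Filter

open Set Topology Metric Complex

theorem AnalyticAt.eventually_eq_of_eventually_pow_eq {E : Type*} [NormedAddCommGroup E]
    [NormedSpace ℂ E] {g : E → ℂ} {z₀ : E} {c : ℂ} {σ : ℕ} (hσ : σ ≠ 0)
    (hg : AnalyticAt ℂ g z₀) (hc : ∀ᶠ z in 𝓝 z₀, g z ^ σ = c) :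
    ∀ᶠ z in 𝓝 z₀, g z = g z₀ := by
  refine hg.eventually_constant_or_nhds_le_map_nhds.resolve_right fun hopen => ?_
  -- otherwise `w ↦ w ^ σ` would be constant near `g z₀`, hence on all of `ℂ`
  have hpow : (fun w : ℂ => w ^ σ) = fun _ => c :=
    AnalyticOnNhd.eq_of_eventuallyEq (𝕜 := ℂ) (fun _ _ => by fun_prop) (fun _ _ => analyticAt_const)
      (hopen hc)
  have h0 := congrFun hpow 0
  have h1 := congrFun hpow 1
  simp only [zero_pow hσ, one_pow] at h0 h1
  exact zero_ne_one (h0.trans h1.symm)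

theorem AnalyticAt.exists_eventuallyEq_monomial_of_pow_eventuallyEq {h : ℂ → ℂ} {σ τ : ℕ}
    {c : ℂ} (hσ : σ ≠ 0) (hh : AnalyticAt ℂ h 0) (hnz : ¬ ∀ᶠ x in 𝓝 0, h x = 0)
    (hc : ∀ᶠ x in 𝓝 0, h x ^ σ = c * x ^ τ) :
    ∃ (b : ℂ) (k : ℕ), σ * k = τ ∧ ∀ᶠ x in 𝓝 0, h x = b * x ^ k := by
  have hc0 : c ≠ 0 := by
    rintro rfl
    exact hnz (hc.mono fun x hx => (pow_eq_zero_iff hσ).1 (by simpa using hx))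
  obtain ⟨g, hg, hg0, hfac⟩ := hh.analyticOrderAt_ne_top.1 fun htop =>
    hnz (analyticOrderAt_eq_top.1 htop)
  set k := analyticOrderNatAt h 0
  have hpow : ∀ᶠ x in 𝓝 0, h x ^ σ = (x - 0) ^ (σ * k) • g x ^ σ := hfac.mono fun x hx => by
    simp only [hx, smul_eq_mul, mul_pow, ← pow_mul, mul_comm k σ]
  have hk : σ * k = τ := AnalyticAt.unique_eventuallyEq_pow_smul_nonzero
    ⟨_, hg.pow σ, pow_ne_zero σ hg0, hpow⟩
    ⟨_, analyticAt_const, hc0, hc.mono fun x hx => by rw [hx, sub_zero, smul_eq_mul, mul_comm]⟩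
  have hgc : ∀ᶠ x in 𝓝 0, g x ^ σ = c := by
    refine ((hg.pow σ).frequently_eq_iff_eventually_eq analyticAt_const).1 ?_
    have : ∀ᶠ x in 𝓝[≠] (0 : ℂ), g x ^ σ = c := by
      filter_upwards [(hpow.and hc).filter_mono nhdsWithin_le_nhds, self_mem_nhdsWithin]
        with x ⟨h₁, h₂⟩ hx
      rw [h₁, sub_zero, hk, smul_eq_mul, mul_comm c] at h₂
      exact mul_left_cancel₀ (pow_ne_zero τ hx) h₂
    exact this.frequently
  refine ⟨g 0, k, hk, ?_⟩
  filter_upwards [hfac, hg.eventually_eq_of_eventually_pow_eq hσ hgc] with x hx hgx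
  rw [hx, hgx, sub_zero, smul_eq_mul, mul_comm]

theorem AnalyticOnNhd.eqOn_closedBall_of_eqOn_sphere {F : Type*} [NormedAddCommGroup F]
    [NormedSpace ℂ F] {f g : ℂ → F} {z : ℂ} {r : ℝ} (hr : 0 < r)
    (hf : AnalyticOnNhd ℂ f (closedBall z r)) (hg : AnalyticOnNhd ℂ g (closedBall z r))
    (hfg : EqOn f g (sphere z r)) : EqOn f g (closedBall z r) := by
  have hplus : z + r ∈ sphere z r := by simp [abs_of_pos hr]
  have hnt : (sphere z r).Nontrivial :=
    ⟨z + r, hplus, z - r, by simp [abs_of_pos hr], fun h => by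
      have := congrArg re h
      simp only [add_re, sub_re, ofReal_re] at this
      linarith⟩
  have hperf : Preperfect (sphere z r) :=
    (isPreconnected_sphere (by simp [rank_real_complex]) z r).preperfect_of_nontrivial hnt
  have hacc : ∃ᶠ w in 𝓝[≠] (z + r), f w = g w :=
    (frequently_mem_iff_neBot.2 (hperf _ hplus)).mono fun w hw => hfg hw
  exact hf.eqOn_of_preconnected_of_frequently_eq hg (convex_closedBall z r).isPreconnected
    (sphere_subset_closedBall hplus) hacc

theorem logCap_pos_of_integral_le {E : Set ℂ} (μ : Measure ℂ) [IsProbabilityMeasure μ]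
    (hμE : μ Eᶜ = 0) (C : ℝ)
    (hC : ∀ (z : ℂ) (N : ℕ), ∫ ζ, min (N : ℝ) (Real.log (1 / ‖z - ζ‖)) ∂μ ≤ C) :
    0 < logCap E := by
  have hrobin : robinConst E ≤ C :=
    (iInf_le_of_le μ <| iInf_le_of_le (inferInstance : IsProbabilityMeasure μ) <|
      iInf_le _ hμE).trans <| iSup_le fun z => iSup_le fun N => EReal.coe_le_coe_iff.2 (hC z N)
  rw [logCap, EReal.zero_lt_exp_iff, EReal.lt_neg_comm, EReal.neg_bot]
  exact hrobin.trans_lt (EReal.coe_lt_top C)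

theorem integrable_posLog_inv : Integrable fun t : ℝ => Real.posLog t⁻¹ := by
  have hsupp : (Function.support fun t : ℝ => Real.posLog t⁻¹) ⊆ Icc (-1) 1 := by
    intro t ht
    by_contra hout
    refine ht ((Real.posLog_eq_zero_iff _).2 ?_)
    rw [abs_inv]
    exact inv_le_one_of_one_le₀ (not_le.1 fun h => hout (abs_le.1 h)).le
  have hint : IntervalIntegrable (fun t : ℝ => Real.posLog ‖t⁻¹‖) volume (-1) 1 :=
    MeromorphicOn.intervalIntegrable_posLog_norm MeromorphicOn.id.inv
  rw [← integrableOn_iff_integrable_of_support_subset hsupp]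
  simpa [intervalIntegrable_iff_integrableOn_Icc_of_le, ← abs_inv] using hint

theorem logCap_pos_of_lipschitz_section {E : Set ℂ} (hE : MeasurableSet E) {p : ℂ → ℝ}
    (hp : LipschitzWith 1 p) {L : ℝ} (hL : 0 < L) {s : ℝ → ℂ} (hs : Measurable s)
    (hsE : ∀ t ∈ Icc 0 L, s t ∈ E) (hps : ∀ t ∈ Icc 0 L, p (s t) = t) : 0 < logCap E := by
  set ν := volume.restrict (Icc 0 L)
  set μ : Measure ℂ := (ENNReal.ofReal L)⁻¹ • ν.map s
  have hνs : ν.map s univ = ENNReal.ofReal L := by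
    rw [Measure.map_apply hs MeasurableSet.univ, preimage_univ, Measure.restrict_apply_univ,
      Real.volume_Icc, sub_zero]
  have : IsProbabilityMeasure μ := ⟨by
    rw [Measure.smul_apply, hνs, smul_eq_mul,
      ENNReal.inv_mul_cancel (by simpa using hL) ENNReal.ofReal_ne_top]⟩
  have hμE : μ Eᶜ = 0 := by
    have : s ⁻¹' Eᶜ ∩ Icc 0 L = ∅ := eq_empty_of_forall_notMem fun t ⟨hout, ht⟩ => hout (hsE t ht)
    rw [Measure.smul_apply, Measure.map_apply hs hE.compl,
      Measure.restrict_apply' measurableSet_Icc, this, measure_empty, smul_zero]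
  refine logCap_pos_of_integral_le μ hμE (L⁻¹ * ∫ t, Real.posLog t⁻¹) fun z N => ?_
  set f : ℂ → ℝ := fun ζ => min (N : ℝ) (Real.log (1 / ‖z - ζ‖))
  have hf : Measurable f := by fun_prop
  have hφ := integrable_posLog_inv.comp_sub_right (p z)
  have hbound : ∀ᵐ t ∂ν, f (s t) ≤ Real.posLog (t - p z)⁻¹ := by
    filter_upwards [ae_restrict_mem measurableSet_Icc, Measure.ae_ne ν (p z)] with t ht hne
    have hdist : |t - p z| ≤ ‖z - s t‖ := by
      simpa [hps t ht, Real.dist_eq, dist_eq_norm, norm_sub_rev] using hp.dist_le_mul (s t) z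
    have hpos : 0 < |t - p z| := abs_pos.2 (sub_ne_zero.2 hne)
    calc f (s t) ≤ Real.log (1 / ‖z - s t‖) := min_le_right _ _
      _ ≤ Real.log |t - p z|⁻¹ := by
        rw [one_div]
        exact Real.log_le_log (inv_pos.2 (hpos.trans_le hdist)) (inv_anti₀ hpos hdist)
      _ ≤ Real.posLog |t - p z|⁻¹ := le_max_right _ _
      _ = Real.posLog (t - p z)⁻¹ := by rw [← abs_inv, Real.posLog_abs]
  have hmono : ∫ t, f (s t) ∂ν ≤ ∫ t, Real.posLog (t - p z)⁻¹ := by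
    by_cases hint : Integrable (fun t => f (s t)) ν
    · calc ∫ t, f (s t) ∂ν ≤ ∫ t, Real.posLog (t - p z)⁻¹ ∂ν :=
            integral_mono_ae hint hφ.integrableOn hbound
        _ ≤ ∫ t, Real.posLog (t - p z)⁻¹ :=
            setIntegral_le_integral hφ (ae_of_all _ fun _ => Real.posLog_nonneg)
    · -- a non-integrable function has integral `0`
      rw [integral_undef hint]
      exact integral_nonneg fun _ => Real.posLog_nonneg
  calc ∫ ζ, f ζ ∂μ = L⁻¹ * ∫ t, f (s t) ∂ν := by
        rw [integral_smul_measure, integral_map hs.aemeasurable hf.aestronglyMeasurable,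
          ENNReal.toReal_inv, ENNReal.toReal_ofReal hL.le, smul_eq_mul]
    _ ≤ L⁻¹ * ∫ t, Real.posLog (t - p z)⁻¹ := by gcongr
    _ = L⁻¹ * ∫ t, Real.posLog t⁻¹ := by
        rw [integral_sub_right_eq_self (fun t => Real.posLog t⁻¹)]

/-- Equal to `0` when the vertical line `re = t` misses `K`, since `sInf ∅ = 0`. -/
noncomputable def lowestIm (K : Set ℂ) (t : ℝ) : ℝ := sInf (im '' (K ∩ re ⁻¹' {t}))

namespace IsCompact

section lowestIm

variable {K : Set ℂ}

theorem isCompact_im_image_inter_re_preimage (hK : IsCompact K) (t : ℝ) :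
    IsCompact (im '' (K ∩ re ⁻¹' {t})) :=
  (hK.inter_right (isClosed_singleton.preimage continuous_re)).image continuous_im

theorem mk_lowestIm_mem (hK : IsCompact K) {t : ℝ} (ht : t ∈ re '' K) :
    (⟨t, lowestIm K t⟩ : ℂ) ∈ K := by
  obtain ⟨z, hz, hzt⟩ := ht
  obtain ⟨w, ⟨hwK, hwt⟩, hw⟩ :=
    (hK.isCompact_im_image_inter_re_preimage t).sInf_mem ⟨z.im, z, ⟨hz, hzt⟩, rfl⟩
  have hwmk : w = ⟨t, lowestIm K t⟩ := Complex.ext hwt hw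
  rwa [← hwmk]

theorem lowestIm_le (hK : IsCompact K) {z : ℂ} (hz : z ∈ K) : lowestIm K z.re ≤ z.im :=
  csInf_le (hK.isCompact_im_image_inter_re_preimage z.re).bddBelow ⟨z, ⟨hz, rfl⟩, rfl⟩

theorem measurable_lowestIm (hK : IsCompact K) : Measurable (lowestIm K) := by
  refine measurable_of_Iic fun c => ?_
  have hpre : lowestIm K ⁻¹' Iic c = re '' (K ∩ im ⁻¹' Iic c) ∪ ((re '' K)ᶜ ∩ {_t | 0 ≤ c}) := by
    ext t
    by_cases ht : t ∈ re '' K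
    · simp only [mem_preimage, mem_Iic, mem_union, mem_inter_iff, mem_compl_iff, ht,
        not_true_eq_false, false_and, or_false]
      constructor
      · exact fun h => ⟨_, ⟨hK.mk_lowestIm_mem ht, h⟩, rfl⟩
      · rintro ⟨z, ⟨hz, hzc⟩, rfl⟩
        exact (hK.lowestIm_le hz).trans hzc
    · have hmiss : K ∩ re ⁻¹' {t} = ∅ :=
        eq_empty_of_forall_notMem fun z ⟨hz, hzt⟩ => ht ⟨z, hz, hzt⟩
      have hnot : t ∉ re '' (K ∩ im ⁻¹' Iic c) := fun ⟨z, hz, hzt⟩ => ht ⟨z, hz.1, hzt⟩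
      simp [lowestIm, hmiss, ht, hnot]
  rw [hpre]
  exact ((hK.inter_right (isClosed_Iic.preimage continuous_im)).image
    continuous_re).isClosed.measurableSet.union
    ((hK.image continuous_re).isClosed.measurableSet.compl.inter (MeasurableSet.const _))

end lowestIm

theorem logCap_pos_of_isPreconnected {E : Set ℂ} (hE : IsCompact E) (hconn : IsPreconnected E)
    (hnt : E.Nontrivial) : 0 < logCap E := by
  obtain ⟨a, ha, b, hb, hab⟩ := hnt
  set L := ‖b - a‖
  have hL : 0 < L := norm_pos_iff.2 (sub_ne_zero.2 hab.symm)
  set e : ℂ := (b - a) / L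
  have he : ‖e‖ = 1 := by simp [e, L, hL.ne']
  have he0 : e ≠ 0 := norm_ne_zero_iff.1 (he ▸ one_ne_zero)
  -- `ψ` is an isometry of `ℂ` taking `a` to `0` and `b` to `L`
  set ψ : ℂ → ℂ := fun z => (z - a) / e
  have hψ : Continuous ψ := by fun_prop
  set K := ψ '' E
  have hK : IsCompact K := hE.image hψ
  have hre : Icc 0 L ⊆ re '' K := by
    have hψb : ψ b = L := div_div_cancel₀ (sub_ne_zero.2 hab.symm)
    simpa [ψ, hψb] using (hconn.image ψ hψ.continuousOn).intermediate_value
      (mem_image_of_mem ψ ha) (mem_image_of_mem ψ hb) continuous_re.continuousOn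
  refine logCap_pos_of_lipschitz_section hE.isClosed.measurableSet (p := fun z => (ψ z).re)
    ?_ hL (s := fun t => a + e * ⟨t, lowestIm K t⟩) ?_ ?_ ?_
  · refine LipschitzWith.of_dist_le_mul fun z w => ?_
    calc dist (ψ z).re (ψ w).re = |(ψ z - ψ w).re| := by rw [Real.dist_eq, sub_re]
      _ ≤ ‖ψ z - ψ w‖ := abs_re_le_norm _
      _ = 1 * dist z w := by
        rw [dist_eq_norm, one_mul, ← sub_div, sub_sub_sub_cancel_right, norm_div, he, div_one]
  · exact measurable_const.add (measurable_const.mul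
      (measurableEquivRealProd.symm.measurable.comp (measurable_id.prodMk hK.measurable_lowestIm)))
  · intro t ht
    obtain ⟨w, hw, hψw⟩ := hK.mk_lowestIm_mem (hre ht)
    rw [← hψw]
    simpa [ψ, mul_div_cancel₀ _ he0] using hw
  · intro t _
    simp [ψ, he0]

end IsCompact

theorem not_exists_forall_mem_sphere_zpow_neg_mul_pow_eq {σ τ : ℕ} (hσ : σ ≠ 0) {h : ℂ → ℂ}
    {r : ℝ} (hr : 0 < r) (hh : AnalyticOnNhd ℂ h (closedBall 0 r))
    (hnz : ¬ ∀ᶠ x in 𝓝 0, h x = 0)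
    (hmono : ¬ ∃ (b : ℂ) (k : ℕ), σ * k = τ ∧ ∀ᶠ x in 𝓝 0, h x = b * x ^ k) :
    ¬ ∃ c : ℂ, ∀ x ∈ sphere (0 : ℂ) r, x ^ (-(τ : ℤ)) * h x ^ σ = c := by
  rintro ⟨c, hc⟩
  have hdisc : EqOn (fun x => h x ^ σ) (fun x => c * x ^ τ) (closedBall 0 r) :=
    AnalyticOnNhd.eqOn_closedBall_of_eqOn_sphere hr (fun x hx => (hh x hx).pow σ)
      (fun _ _ => by fun_prop) fun x hx => by
        have hx0 : x ^ τ ≠ 0 := pow_ne_zero τ (ne_zero_of_mem_sphere hr.ne' ⟨x, hx⟩)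
        rw [mul_comm]
        exact (inv_mul_eq_iff_eq_mul₀ hx0).1 (by simpa only [zpow_neg, zpow_natCast] using hc x hx)
  exact hmono <| AnalyticAt.exists_eventuallyEq_monomial_of_pow_eventuallyEq hσ
    (hh 0 (mem_closedBall_self hr.le)) hnz (mem_of_superset (closedBall_mem_nhds 0 hr) hdisc)

theorem image_of_circle_positive_capacity_general (σ τ : ℕ) (hσ : 0 < σ)
    (h : ℂ → ℂ) (r : ℝ) (hr : 0 < r)
    (hhol : ∀ x ∈ Metric.closedBall (0 : ℂ) r, AnalyticAt ℂ h x)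
    (hne : ∀ x : ℂ, x ≠ 0 → ‖x‖ ≤ r → h x ≠ 0)
    (hmono : ¬ ∃ (b : ℂ) (k : ℕ), σ * k = τ ∧ ∀ᶠ x in nhds (0 : ℂ), h x = b * x ^ k) :
    (¬ ∃ c : ℂ, ∀ x : ℂ, x ≠ 0 → ‖x‖ ≤ r → x ^ (-(τ : ℤ)) * h x ^ σ = c) ∧
    IsCompact ((fun x => x ^ (-(τ : ℤ)) * h x ^ σ) '' Metric.sphere (0 : ℂ) r) ∧
    0 < logCap ((fun x => x ^ (-(τ : ℤ)) * h x ^ σ) '' Metric.sphere (0 : ℂ) r) := by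
  set u : ℂ → ℂ := fun x => x ^ (-(τ : ℤ)) * h x ^ σ
  have hsphere0 : ∀ x ∈ sphere (0 : ℂ) r, x ≠ 0 := fun x hx =>
    ne_zero_of_mem_sphere hr.ne' ⟨x, hx⟩
  have hnz : ¬ ∀ᶠ x in 𝓝 0, h x = 0 := fun hev => by
    have hpunct : ∀ᶠ x in 𝓝[≠] (0 : ℂ), x ≠ 0 := self_mem_nhdsWithin
    have hball : ∀ᶠ x in 𝓝 (0 : ℂ), x ∈ closedBall 0 r := closedBall_mem_nhds 0 hr
    obtain ⟨x, hx0, hxr, hx⟩ :=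
      (hpunct.and ((hball.and hev).filter_mono nhdsWithin_le_nhds)).exists
    exact hne x hx0 (mem_closedBall_zero_iff.1 hxr) hx
  have hnotconst : ¬ ∃ c, ∀ x ∈ sphere (0 : ℂ) r, u x = c :=
    not_exists_forall_mem_sphere_zpow_neg_mul_pow_eq hσ.ne' hr hhol hnz hmono
  have hcont : ContinuousOn u (sphere 0 r) := fun x hx =>
    ((continuousAt_zpow₀ x _ (Or.inl (hsphere0 x hx))).mul
      ((hhol x (sphere_subset_closedBall hx)).continuousAt.pow σ)).continuousWithinAt
  have hcompact : IsCompact (u '' sphere 0 r) := (isCompact_sphere 0 r).image_of_continuousOn hcont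
  have hconn : IsPreconnected (u '' sphere 0 r) :=
    (isPreconnected_sphere (by simp [rank_real_complex]) 0 r).image u hcont
  have hnt : (u '' sphere 0 r).Nontrivial := not_subsingleton_iff.1 fun hsub =>
    hnotconst ⟨u r, fun x hx => hsub (mem_image_of_mem u hx) (mem_image_of_mem u (by simp [hr.le]))⟩
  refine ⟨fun ⟨c, hc⟩ => hnotconst ⟨c, fun x hx => ?_⟩, hcompact,
    hcompact.logCap_pos_of_isPreconnected hconn hnt⟩
  exact hc x (hsphere0 x hx) (norm_eq_of_mem_sphere ⟨x, hx⟩).le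

/-- If `h` is holomorphic near the closed disc of radius `r`, `h(0)=0`,
`h ≠ 0` on the punctured disc, and `h` is not a monomial `b x^k` with `σk = τ`,
then `u(x) = x^{-τ} h(x)^σ` is non-constant (on the punctured disc), and the
image `F = u(S)` of the circle `S = {|x| = r}` is compact of positive
logarithmic capacity. -/
theorem image_of_circle_positive_capacity (σ τ : ℕ) (hσ : 0 < σ) (hτ : 0 < τ)
    (h : ℂ → ℂ) (r : ℝ) (hr : 0 < r)
    (hhol : ∀ x ∈ Metric.closedBall (0 : ℂ) r, AnalyticAt ℂ h x)
    (hh0 : h 0 = 0)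
    (hne : ∀ x : ℂ, x ≠ 0 → ‖x‖ ≤ r → h x ≠ 0)
    (hmono : ¬ ∃ (b : ℂ) (k : ℕ), σ * k = τ ∧ ∀ᶠ x in nhds (0 : ℂ), h x = b * x ^ k) :
    (¬ ∃ c : ℂ, ∀ x : ℂ, x ≠ 0 → ‖x‖ ≤ r → x ^ (-(τ : ℤ)) * h x ^ σ = c) ∧
    IsCompact ((fun x => x ^ (-(τ : ℤ)) * h x ^ σ) '' Metric.sphere (0 : ℂ) r) ∧
    0 < logCap ((fun x => x ^ (-(τ : ℤ)) * h x ^ σ) '' Metric.sphere (0 : ℂ) r) :=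
  image_of_circle_positive_capacity_general σ τ hσ h r hr hhol hne hmono
end

section
/- Let β(x) = cx + ⋯ (c ≠ 0) be a power series convergent and univalent in a neighborhood of {|x| ≤ r}, with inverse γ convergent on {|z| < δ} where {|z| < δ} ⊂ β({|x| < r}). Let ψ(t) be a formal power series and ν a positive integer such that α(x) := ψ(β(x)^ν) is convergent in a neighborhood of {|x| ≤ r}. Then ψ(t) is convergent on {|t| < δ^ν} and sup_{|t|<δ^ν} |ψ(t)| ≤ max_{|x|=r} |α(x)|. -/
/-- The Taylor series of a function `F : ℂ → ℂ` at `0`. -/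
noncomputable def taylorPS (F : ℂ → ℂ) : PowerSeries ℂ :=
  PowerSeries.mk fun n => iteratedDeriv n F 0 / (n.factorial : ℂ)

/-- The `p`-th coefficient of the formal composition `ψ(u(x))`, valid when
`u(0) = 0`. -/
noncomputable def onecomp (ψ u : PowerSeries ℂ) (p : ℕ) : ℂ :=
  ∑ j ∈ Finset.range (p + 1), PowerSeries.coeff (R := ℂ) j ψ * PowerSeries.coeff (R := ℂ) p (u ^ j)

/-! The function `A ∘ γ` is holomorphic on `{|z| < δ}`, and since `β(γ(z))^ν = z^ν` its Taylor
series is the formal substitution `ψ(z^ν)`. Taylor series turn composition of analytic germs into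
substitution of power series; this is seen one truncation at a time, because `A - ψ_{<n}(β^ν)`
vanishes to order `n` at `0` and composing with `γ` (`γ(0) = 0`) does not lower the order. Hence
`∑ ψ_m z^{νm} = A(γ(z))` for `|z| < δ`, which for `t = z^ν` gives the convergence of `ψ(t)`, and
the bound is the maximum modulus principle for `A` on the disc of radius `r`, which contains
`γ(z)`. -/

open PowerSeries Filter Topology Metric

theorem PowerSeries.coeff_pow_eq_zero_of_lt {R : Type*} [CommRing R] {u : PowerSeries R}
    (hu : constantCoeff u = 0) {k j : ℕ} (h : k < j) : coeff k (u ^ j) = 0 :=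
  coeff_of_lt_order _ ((Nat.cast_lt.2 h).trans_le (le_order_pow_of_constantCoeff_eq_zero j hu))

section FormalComposition

variable {ψ u : PowerSeries ℂ}

theorem coeff_subst_eq_onecomp (hu : constantCoeff u = 0) (k : ℕ) :
    coeff k (ψ.subst u) = onecomp ψ u k := by
  rw [coeff_subst' (HasSubst.of_constantCoeff_zero' hu), onecomp,
    finsum_eq_sum_of_support_subset _ (s := Finset.range (k + 1)) fun j hj => ?_]
  · simp only [smul_eq_mul]
  · by_contra hjk
    simp only [Finset.coe_range, Set.mem_Iio, not_lt] at hjk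
    exact hj (by simp only [coeff_pow_eq_zero_of_lt hu hjk, smul_zero])

theorem coeff_aeval_trunc_eq_onecomp (hu : constantCoeff u = 0) {k n : ℕ} (hk : k < n) :
    coeff k (Polynomial.aeval u (trunc n ψ)) = onecomp ψ u k := by
  rw [Polynomial.aeval_def, eval₂_trunc_eq_sum_range, map_sum, onecomp]
  simp only [← C_eq_algebraMap, coeff_C_mul]
  refine (Finset.sum_subset (Finset.range_subset_range.2 hk) fun j _ hj => ?_).symm
  rw [coeff_pow_eq_zero_of_lt hu (by simpa using hj), mul_zero]

end FormalComposition

section TaylorSeries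

variable {f g : ℂ → ℂ}

theorem coeff_taylorPS (f : ℂ → ℂ) (n : ℕ) :
    coeff n (taylorPS f) = iteratedDeriv n f 0 / n.factorial :=
  coeff_mk _ _

theorem constantCoeff_taylorPS (f : ℂ → ℂ) : constantCoeff (taylorPS f) = f 0 := by
  simp [← coeff_zero_eq_constantCoeff_apply, coeff_taylorPS]

theorem taylorPS_congr (h : f =ᶠ[𝓝 0] g) : taylorPS f = taylorPS g := by
  ext n
  simp only [coeff_taylorPS, h.iteratedDeriv_eq n]

theorem taylorPS_const (a : ℂ) : taylorPS (fun _ => a) = C a := by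
  ext n
  rcases n with _ | n <;> simp [coeff_taylorPS, iteratedDeriv_const, coeff_C]

theorem taylorPS_id_pow (m : ℕ) : taylorPS (fun z => z ^ m) = X ^ m := by
  ext n
  simp only [coeff_taylorPS, iteratedDeriv_fun_pow_zero, coeff_X_pow]
  split_ifs with h
  · simp [h, Nat.factorial_ne_zero]
  · simp

theorem taylorPS_add (hf : AnalyticAt ℂ f 0) (hg : AnalyticAt ℂ g 0) :
    taylorPS (fun x => f x + g x) = taylorPS f + taylorPS g := by
  ext n
  simp only [coeff_taylorPS, map_add, iteratedDeriv_fun_add hf.contDiffAt hg.contDiffAt, add_div]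

theorem taylorPS_mul (hf : AnalyticAt ℂ f 0) (hg : AnalyticAt ℂ g 0) :
    taylorPS (fun x => f x * g x) = taylorPS f * taylorPS g := by
  ext n
  simp only [coeff_taylorPS, iteratedDeriv_fun_mul hf.contDiffAt hg.contDiffAt, Finset.sum_div,
    coeff_mul, Finset.Nat.sum_antidiagonal_eq_sum_range_succ_mk]
  refine Finset.sum_congr rfl fun i hi => ?_
  rw [Nat.cast_choose ℂ (Finset.mem_range_succ_iff.1 hi)]
  field_simp [Nat.factorial_ne_zero]

theorem taylorPS_pow (hf : AnalyticAt ℂ f 0) (m : ℕ) :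
    taylorPS (fun x => f x ^ m) = taylorPS f ^ m := by
  induction m with
  | zero => simpa using taylorPS_const 1
  | succ m ih =>
    simp only [pow_succ, ← ih]
    exact taylorPS_mul (hf.pow m) hf

theorem taylorPS_eval_comp (p : Polynomial ℂ) (hf : AnalyticAt ℂ f 0) :
    taylorPS (fun x => p.eval (f x)) = Polynomial.aeval (taylorPS f) p := by
  induction p using Polynomial.induction_on' with
  | add p q hp hq =>
    simp only [Polynomial.eval_add, map_add, ← hp, ← hq]
    exact taylorPS_add ((AnalyticOnNhd.eval_polynomial p _ trivial).comp hf)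
      ((AnalyticOnNhd.eval_polynomial q _ trivial).comp hf)
  | monomial n a =>
    simp only [Polynomial.eval_monomial, Polynomial.aeval_monomial, ← C_eq_algebraMap,
      ← taylorPS_const, ← taylorPS_pow hf]
    exact taylorPS_mul analyticAt_const (hf.pow n)

end TaylorSeries

theorem AnalyticAt.analyticOrderAt_le_comp_of_eq {𝕜 E : Type*} [NontriviallyNormedField 𝕜]
    [NormedAddCommGroup E] [NormedSpace 𝕜 E] {f : 𝕜 → E} {g : 𝕜 → 𝕜} {z₀ w : 𝕜}
    (hf : AnalyticAt 𝕜 f w) (hg : AnalyticAt 𝕜 g z₀) (hw : g z₀ = w) :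
    analyticOrderAt f w ≤ analyticOrderAt (f ∘ g) z₀ := by
  subst hw
  rw [hf.analyticOrderAt_comp hg]
  refine le_mul_of_one_le_right' (Order.one_le_iff_ne_zero.2 ?_)
  exact AnalyticAt.analyticOrderAt_ne_zero (hg.sub analyticAt_const) |>.2 (sub_self _)

theorem natCast_le_analyticOrderAt_sub_iff {f g : ℂ → ℂ} (hf : AnalyticAt ℂ f 0)
    (hg : AnalyticAt ℂ g 0) {n : ℕ} :
    (n : ℕ∞) ≤ analyticOrderAt (f - g) 0 ↔
      ∀ k < n, coeff k (taylorPS f) = coeff k (taylorPS g) := by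
  rw [natCast_le_analyticOrderAt_iff_iteratedDeriv_eq_zero (hf.sub hg)]
  refine forall₂_congr fun k _ => ?_
  rw [iteratedDeriv_sub hf.contDiffAt hg.contDiffAt, sub_eq_zero, coeff_taylorPS, coeff_taylorPS,
    div_left_inj' (Nat.cast_ne_zero.2 k.factorial_ne_zero)]

theorem taylorPS_eq_subst_iff {F U : ℂ → ℂ} {ψ : PowerSeries ℂ} (hF : AnalyticAt ℂ F 0)
    (hU : AnalyticAt ℂ U 0) (hU0 : U 0 = 0) :
    taylorPS F = ψ.subst (taylorPS U) ↔
      ∀ n : ℕ, (n : ℕ∞) ≤ analyticOrderAt (F - fun x => (trunc n ψ).eval (U x)) 0 := by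
  have hu : constantCoeff (taylorPS U) = 0 := by rw [constantCoeff_taylorPS, hU0]
  have hP (n : ℕ) : AnalyticAt ℂ (fun x => (trunc n ψ).eval (U x)) 0 :=
    (AnalyticOnNhd.eval_polynomial _ _ trivial).comp hU
  simp_rw [natCast_le_analyticOrderAt_sub_iff hF (hP _), taylorPS_eval_comp _ hU]
  refine ⟨fun h n k hk => ?_, fun h => ext fun k => ?_⟩
  · rw [h, coeff_subst_eq_onecomp hu, coeff_aeval_trunc_eq_onecomp hu hk]
  · rw [h (k + 1) k k.lt_succ_self, coeff_aeval_trunc_eq_onecomp hu k.lt_succ_self,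
      coeff_subst_eq_onecomp hu]

theorem taylorPS_comp_eq_subst {A U γ : ℂ → ℂ} {ψ : PowerSeries ℂ} (hA : AnalyticAt ℂ A 0)
    (hU : AnalyticAt ℂ U 0) (hU0 : U 0 = 0) (hγ : AnalyticAt ℂ γ 0) (hγ0 : γ 0 = 0)
    (h : taylorPS A = ψ.subst (taylorPS U)) : taylorPS (A ∘ γ) = ψ.subst (taylorPS (U ∘ γ)) := by
  rw [taylorPS_eq_subst_iff hA hU hU0] at h
  rw [taylorPS_eq_subst_iff (hA.comp_of_eq hγ hγ0) (hU.comp_of_eq hγ hγ0)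
    (by rw [Function.comp_apply, hγ0, hU0])]
  intro n
  have hD : AnalyticAt ℂ (A - fun x => (trunc n ψ).eval (U x)) 0 :=
    hA.sub ((AnalyticOnNhd.eval_polynomial _ _ trivial).comp hU)
  exact (h n).trans (hD.analyticOrderAt_le_comp_of_eq hγ hγ0)

theorem taylorPS_comp_eq_expand {A B γ : ℂ → ℂ} {ψ : PowerSeries ℂ} {ν : ℕ} (hν : ν ≠ 0)
    (hA : AnalyticAt ℂ A 0) (hB : AnalyticAt ℂ B 0) (hB0 : B 0 = 0) (hγ : AnalyticAt ℂ γ 0)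
    (hγ0 : γ 0 = 0) (hBγ : B ∘ γ =ᶠ[𝓝 0] id) (h : taylorPS A = ψ.subst (taylorPS B ^ ν)) :
    taylorPS (A ∘ γ) = ψ.expand ν hν := by
  rw [← taylorPS_pow hB] at h
  have hBγν : (fun x => B x ^ ν) ∘ γ =ᶠ[𝓝 0] fun z => z ^ ν := hBγ.fun_comp (· ^ ν)
  rw [taylorPS_comp_eq_subst (U := fun x => B x ^ ν) hA (hB.pow ν) (by simp [hB0, hν]) hγ hγ0 h,
    taylorPS_congr hBγν, taylorPS_id_pow, expand_apply]

theorem hasSum_coeff_taylorPS_mul_pow {f : ℂ → ℂ} {R : ℝ} (hf : DifferentiableOn ℂ f (ball 0 R))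
    {z : ℂ} (hz : z ∈ ball 0 R) : HasSum (fun n => coeff n (taylorPS f) * z ^ n) (f z) := by
  refine (Complex.hasSum_taylorSeries_on_ball hf hz).congr_fun fun n => ?_
  rw [coeff_taylorPS, sub_zero, smul_eq_mul, smul_eq_mul]
  ring

theorem PowerSeries.hasSum_coeff_expand_mul_pow_iff {R : Type*} [CommRing R] [TopologicalSpace R]
    (p : ℕ) (hp : p ≠ 0) (φ : PowerSeries R) (z s : R) :
    HasSum (fun k => coeff k (expand p hp φ) * z ^ k) s ↔
      HasSum (fun m => coeff m φ * (z ^ p) ^ m) s := by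
  rw [← (mul_right_injective₀ hp).hasSum_iff fun k hk => ?_]
  · simp only [Function.comp_def, coeff_expand_mul, pow_mul]
  · rw [coeff_expand_of_not_dvd p hp φ fun ⟨m, hm⟩ => hk ⟨m, hm.symm⟩, zero_mul]

theorem norm_le_sSup_norm_image_sphere {F : Type*} [NormedAddCommGroup F] [NormedSpace ℂ F]
    {f : ℂ → F} {c : ℂ} {r : ℝ} (hr : 0 < r) (hf : DifferentiableOn ℂ f (closedBall c r)) {w : ℂ}
    (hw : w ∈ closedBall c r) : ‖f w‖ ≤ sSup ((fun x => ‖f x‖) '' sphere c r) := by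
  refine Complex.norm_le_of_forall_mem_frontier_norm_le isBounded_ball
    (hf.diffContOnCl_ball subset_rfl) (fun x hx => ?_) (by rwa [closure_ball c hr.ne'])
  rw [frontier_ball c hr.ne'] at hx
  exact le_csSup ((isCompact_sphere c r).bddAbove_image
    (hf.continuousOn.mono sphere_subset_closedBall).norm) (Set.mem_image_of_mem _ hx)

theorem formal_series_convergent_via_univalent_substitution_general
    (r δ : ℝ) (hr : 0 < r) (hδ : 0 < δ)
    (B γ A : ℂ → ℂ) (ψ : PowerSeries ℂ) (ν : ℕ) (hν : 0 < ν)
    (hBa : ∀ x ∈ Metric.closedBall (0 : ℂ) r, AnalyticAt ℂ B x)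
    (hB0 : B 0 = 0)
    (hγa : ∀ z ∈ Metric.ball (0 : ℂ) δ, AnalyticAt ℂ γ z)
    (hγB : ∀ x ∈ Metric.closedBall (0 : ℂ) r, γ (B x) = x)
    (hBγ : ∀ z ∈ Metric.ball (0 : ℂ) δ, B (γ z) = z)
    (hδsub : Metric.ball (0 : ℂ) δ ⊆ B '' Metric.ball (0 : ℂ) r)
    (hAa : ∀ x ∈ Metric.closedBall (0 : ℂ) r, AnalyticAt ℂ A x)
    (hAser : ∀ p : ℕ, iteratedDeriv p A 0 / (p.factorial : ℂ) =
      onecomp ψ ((taylorPS B) ^ ν) p) :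
    ∀ t : ℂ, ‖t‖ < δ ^ ν →
      Summable (fun n => PowerSeries.coeff (R := ℂ) n ψ * t ^ n) ∧
      ‖∑' n : ℕ, PowerSeries.coeff (R := ℂ) n ψ * t ^ n‖ ≤
        sSup ((fun x => ‖A x‖) '' Metric.sphere (0 : ℂ) r) := by
  have h0r : (0 : ℂ) ∈ closedBall (0 : ℂ) r := mem_closedBall_self hr.le
  have hγ0 : γ 0 = 0 := by simpa [hB0] using hγB 0 h0r
  have hγmaps : Set.MapsTo γ (ball 0 δ) (ball 0 r) := by
    intro z hz
    obtain ⟨x, hx, rfl⟩ := hδsub hz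
    rwa [hγB x (ball_subset_closedBall hx)]
  have hA : taylorPS A = ψ.subst (taylorPS B ^ ν) := by
    ext p
    rw [coeff_subst_eq_onecomp (by simp [constantCoeff_taylorPS, hB0, hν.ne']), coeff_taylorPS,
      hAser]
  have hBγ' : B ∘ γ =ᶠ[𝓝 0] id := by
    filter_upwards [ball_mem_nhds 0 hδ] with z hz using hBγ z hz
  have hexpand := taylorPS_comp_eq_expand hν.ne' (hAa 0 h0r) (hBa 0 h0r) hB0
    (hγa 0 (mem_ball_self hδ)) hγ0 hBγ' hA
  intro t ht
  obtain ⟨z, rfl⟩ := IsAlgClosed.exists_pow_nat_eq t hν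
  have hz : z ∈ ball (0 : ℂ) δ := by
    rw [norm_pow] at ht
    exact mem_ball_zero_iff.2 (lt_of_pow_lt_pow_left₀ ν hδ.le ht)
  have hAγ : DifferentiableOn ℂ (A ∘ γ) (ball 0 δ) :=
    (AnalyticOnNhd.comp hAa hγa (hγmaps.mono_right ball_subset_closedBall)).differentiableOn
  have hsum := (hasSum_coeff_expand_mul_pow_iff ν hν.ne' ψ z _).1
    (hexpand ▸ hasSum_coeff_taylorPS_mul_pow hAγ hz)
  refine ⟨hsum.summable, hsum.tsum_eq ▸ ?_⟩
  exact norm_le_sSup_norm_image_sphere hr (AnalyticOnNhd.differentiableOn hAa)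
    (ball_subset_closedBall (hγmaps hz))

/-- If `β` is holomorphic and univalent near the closed disc of radius `r` with
`β(0)=0`, `β'(0)=c ≠ 0`, with holomorphic inverse `γ` on `{|z|<δ} ⊆ β({|x|<r})`,
and the formal series `α = ψ(β^ν)` is realized by a function `A` holomorphic
near the closed disc of radius `r`, then `ψ` converges on `{|t| < δ^ν}` and
`sup_{|t|<δ^ν} |ψ(t)| ≤ max_{|x|=r} |α(x)|`. -/
theorem formal_series_convergent_via_univalent_substitution
    (r δ : ℝ) (hr : 0 < r) (hδ : 0 < δ)
    (B γ A : ℂ → ℂ) (ψ : PowerSeries ℂ) (ν : ℕ) (hν : 0 < ν)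
    (hBa : ∀ x ∈ Metric.closedBall (0 : ℂ) r, AnalyticAt ℂ B x)
    (hB0 : B 0 = 0) (hc : deriv B 0 ≠ 0)
    (hinj : Set.InjOn B (Metric.closedBall (0 : ℂ) r))
    (hγa : ∀ z ∈ Metric.ball (0 : ℂ) δ, AnalyticAt ℂ γ z)
    (hγB : ∀ x ∈ Metric.closedBall (0 : ℂ) r, γ (B x) = x)
    (hBγ : ∀ z ∈ Metric.ball (0 : ℂ) δ, B (γ z) = z)
    (hδsub : Metric.ball (0 : ℂ) δ ⊆ B '' Metric.ball (0 : ℂ) r)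
    (hAa : ∀ x ∈ Metric.closedBall (0 : ℂ) r, AnalyticAt ℂ A x)
    (hAser : ∀ p : ℕ, iteratedDeriv p A 0 / (p.factorial : ℂ) =
      onecomp ψ ((taylorPS B) ^ ν) p) :
    ∀ t : ℂ, ‖t‖ < δ ^ ν →
      Summable (fun n => PowerSeries.coeff (R := ℂ) n ψ * t ^ n) ∧
      ‖∑' n : ℕ, PowerSeries.coeff (R := ℂ) n ψ * t ^ n‖ ≤
        sSup ((fun x => ‖A x‖) '' Metric.sphere (0 : ℂ) r) :=
  formal_series_convergent_via_univalent_substitution_general r δ hr hδ B γ A ψ ν hν hBa hB0 hγa hγB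
    hBγ hδsub hAa hAser
end
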